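/- arXiv:2105.02614 — 3 statements merged into one kernel-verified Lean document; each statement's English description precedes it below -/
import Mathlib

section
/- Let (M,d) be a compact metric space with base point p satisfying condition (B'). Let L = (M × M) \ Δ_M be the off-diagonal, Λ = {ΦF : F Lipschitz on M, F(p) = 0} ⊆ C_b(L) and λ = Λ ∩ C₀(L), where (ΦF)(s,t) = (F(s) − F(t))/d(s,t). Then λ is an M-ideal in Λ. -/
/-- The off-diagonal `L = (M × M) \ Δ_M`. -/
abbrev OffDiag (M : Type*) [MetricSpace M] : Type _ := {q : M × M // q.1 ≠ q.2}

/-- A function is little Lipschitz if for every `ε > 0` there is `δ > 0` such that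
`|f s - f t| ≤ ε * dist s t` whenever `dist s t < δ`. -/
def LittleLip {M : Type*} [MetricSpace M] (f : M → ℝ) : Prop :=
  ∀ ε > (0 : ℝ), ∃ δ > (0 : ℝ), ∀ s t : M, dist s t < δ → |f s - f t| ≤ ε * dist s t

/-- The image `Λ` of `Lip₀(M)` in `C_b(L)` under the de Leeuw transform
`(Φ F)(s,t) = (F s - F t) / dist s t`. -/
def deLeeuwSubmodule (M : Type*) [MetricSpace M] (p : M) :
    Submodule ℝ (BoundedContinuousFunction (OffDiag M) ℝ) where
  carrier := {h | ∃ F : M → ℝ, F p = 0 ∧ (∃ K : ℝ, ∀ s t : M, |F s - F t| ≤ K * dist s t) ∧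
      ∀ q : OffDiag M, h q = (F q.1.1 - F q.1.2) / dist q.1.1 q.1.2}
  zero_mem' := ⟨fun _ => 0, rfl, ⟨0, fun s t => by simp⟩, fun q => by simp⟩
  add_mem' := by
    rintro h₁ h₂ ⟨F, hFp, ⟨K₁, hK₁⟩, hF⟩ ⟨G, hGp, ⟨K₂, hK₂⟩, hG⟩
    refine ⟨fun t => F t + G t, by simp [hFp, hGp], ⟨K₁ + K₂, fun s t => ?_⟩, fun q => ?_⟩
    · calc |F s + G s - (F t + G t)| = |(F s - F t) + (G s - G t)| := by congr 1; ring
        _ ≤ |F s - F t| + |G s - G t| := abs_add_le _ _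
        _ ≤ K₁ * dist s t + K₂ * dist s t := add_le_add (hK₁ s t) (hK₂ s t)
        _ = (K₁ + K₂) * dist s t := by ring
    · rw [BoundedContinuousFunction.add_apply, hF q, hG q]
      ring
  smul_mem' := by
    rintro c h ⟨F, hFp, ⟨K, hK⟩, hF⟩
    refine ⟨fun t => c * F t, by simp [hFp], ⟨|c| * K, fun s t => ?_⟩, fun q => ?_⟩
    · calc |c * F s - c * F t| = |c| * |F s - F t| := by rw [← abs_mul]; congr 1; ring
        _ ≤ |c| * (K * dist s t) := mul_le_mul_of_nonneg_left (hK s t) (abs_nonneg c)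
        _ = |c| * K * dist s t := by ring
    · have : (c • h) q = c * h q := by
        rw [BoundedContinuousFunction.coe_smul]; simp
      rw [this, hF q]
      ring

/-- A subset `E₀` of a Banach space `E` is an *M-ideal* in `E` if there is a bounded linear
projection `P` on the dual `E*` whose kernel is the annihilator of `E₀` and which satisfies
`‖φ‖ = ‖P φ‖ + ‖φ - P φ‖` for every `φ ∈ E*`. -/
def IsMIdeal {E : Type*} [NormedAddCommGroup E] [NormedSpace ℝ E] (E₀ : Set E) : Prop :=
  ∃ P : (E →L[ℝ] ℝ) →L[ℝ] (E →L[ℝ] ℝ),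
    (∀ φ, P (P φ) = P φ) ∧
    (∀ φ, P φ = 0 ↔ ∀ y ∈ E₀, φ y = 0) ∧
    (∀ φ, ‖φ‖ = ‖P φ‖ + ‖φ - P φ‖)

/-- A bounded continuous function vanishes at infinity if `{t | ε ≤ ‖f t‖}` is compact
for every `ε > 0`. -/
def ZeroAtInfty {L Y : Type*} [TopologicalSpace L] [NormedAddCommGroup Y]
    (f : BoundedContinuousFunction L Y) : Prop :=
  ∀ ε > (0 : ℝ), IsCompact {t : L | ε ≤ ‖f t‖}

/-!
Since `M` is compact, an element of `Λ` vanishes at infinity on `L` iff it vanishes near the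
diagonal. Condition (B') approximates every `h ∈ Λ` by elements of `λ`, uniformly away from the
diagonal and without increasing the norm. By a gliding hump argument, for `φ ∈ Λ*` the values of
`φ` along any such approximation of `h` converge, and the limit `(P φ) h` defines a norm-one
projection `P` with kernel `λ^⊥`. For `‖φ‖ ≥ ‖P φ‖ + ‖φ - P φ‖`, take `e ∈ λ` nearly norming
`P φ`, `w` nearly norming `φ - P φ`, and `y = w - (g₁ + ⋯ + gₙ) / n` with `gᵢ ∈ λ` approximating
`w` and having disjoint transition zones. Then `(φ - P φ) y = (φ - P φ) w`, `P φ` is small on `y`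
because `y` is small away from the diagonal, and `‖e + y‖ ≤ 1 + 1 / n + O(η)` because `e` is
small near the diagonal; so `‖P φ‖ + ‖φ - P φ‖ ≲ φ (e + y) ≤ ‖φ‖ (1 + 1 / n + O(η))`.
-/

open Filter Topology BoundedContinuousFunction Finset

/-- The dual with the module structure of `E` coming from `NormedSpace`: for a submodule of
`C_b(L)` it is not reducibly the one `Submodule` provides, and the operator norm needs it. -/
abbrev NormedDual (E : Type*) [NormedAddCommGroup E] [NormedSpace ℝ E] : Type _ := E →L[ℝ] ℝ

lemma ContinuousLinearMap.exists_norm_le_one_le_apply {E : Type*} [NormedAddCommGroup E]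
    [NormedSpace ℝ E] (T : NormedDual E) {η : ℝ} (hη : 0 < η) :
    ∃ x : E, ‖x‖ ≤ 1 ∧ ‖T‖ - η ≤ T x := by
  obtain ⟨x, hx, hTx⟩ := T.exists_lt_apply_of_lt_opNorm (sub_lt_self ‖T‖ hη)
  rcases le_total 0 (T x) with h | h
  · exact ⟨x, hx.le, by rw [Real.norm_eq_abs, abs_of_nonneg h] at hTx; exact hTx.le⟩
  · refine ⟨-x, by rw [norm_neg]; exact hx.le, ?_⟩
    rw [Real.norm_eq_abs, abs_of_nonpos h] at hTx
    simpa using hTx.le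

lemma abs_mul_div_abs_add_one_le (c : ℝ) {ε : ℝ} (hε : 0 ≤ ε) : |c| * (ε / (|c| + 1)) ≤ ε := by
  rw [mul_div_assoc', div_le_iff₀ (by positivity)]
  nlinarith [abs_nonneg c]

lemma abs_sum_range_le_of_subsingleton_support {f : ℕ → ℝ} {C : ℝ} (hC : 0 ≤ C)
    (hf : ∀ k, |f k| ≤ C) (hsupp : (Function.support f).Subsingleton) (m : ℕ) :
    |∑ k ∈ range m, f k| ≤ C := by
  by_cases h : ∃ k ∈ range m, f k ≠ 0
  · obtain ⟨k, hk, hfk⟩ := h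
    rw [sum_eq_single_of_mem k hk fun j _ hjk => by_contra fun hfj => hjk (hsupp hfj hfk)]
    exact hf k
  · push Not at h
    rw [sum_eq_zero h, abs_zero]
    exact hC

lemma sum_range_le_of_antitone {Δ t : ℕ → ℝ} (hΔ : Antitone Δ) {r A c : ℝ} (hc : 0 ≤ c)
    (ht : ∀ i, t i ≤ A + c) (ht_out : ∀ i, r < Δ (i + 1) ∨ Δ i ≤ r → t i ≤ A) (n : ℕ) :
    ∑ i ∈ range n, t i ≤ n * A + c := by
  set T := (range n).filter fun i => Δ (i + 1) ≤ r ∧ r < Δ i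
  have hT : #T ≤ 1 := card_le_one.2 fun i hi j hj => by
    simp only [T, mem_filter] at hi hj
    by_contra hij
    rcases lt_or_gt_of_ne hij with h | h <;> linarith [hΔ (Nat.succ_le_of_lt h)]
  calc ∑ i ∈ range n, t i ≤ ∑ i ∈ range n, (A + if i ∈ T then c else 0) := by
        refine sum_le_sum fun i hi => ?_
        split_ifs with hiT
        · exact ht i
        · simp only [T, mem_filter, not_and_or, not_le, not_lt, hi, not_true, false_or] at hiT
          simpa using ht_out i hiT
    _ = n * A + #T * c := by
        rw [sum_add_distrib, sum_ite_mem, inter_eq_right.2 (filter_subset _ _), sum_const,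
          sum_const, card_range, nsmul_eq_mul, nsmul_eq_mul]
    _ ≤ n * A + c := by gcongr; exact mul_le_of_le_one_left hc (by exact_mod_cast hT)

namespace OffDiag

variable {M : Type*} [MetricSpace M]

def dist (q : OffDiag M) : ℝ := Dist.dist q.1.1 q.1.2

lemma dist_pos (q : OffDiag M) : 0 < q.dist := _root_.dist_pos.2 q.2

@[fun_prop]
lemma continuous_dist : Continuous (OffDiag.dist : OffDiag M → ℝ) :=
  (continuous_fst.comp continuous_subtype_val).dist (continuous_snd.comp continuous_subtype_val)

end OffDiag

section GlidingHump

variable {M : Type*} [MetricSpace M]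

variable (M) in
def vanishingNearDiag : Submodule ℝ (OffDiag M →ᵇ ℝ) where
  carrier := {u | ∀ ε > 0, ∃ δ > 0, ∀ q : OffDiag M, q.dist < δ → |u q| ≤ ε}
  zero_mem' ε hε := ⟨1, one_pos, fun q _ => by simpa using hε.le⟩
  add_mem' {u v} hu hv ε hε := by
    obtain ⟨δ₁, hδ₁, hu⟩ := hu (ε / 2) (half_pos hε)
    obtain ⟨δ₂, hδ₂, hv⟩ := hv (ε / 2) (half_pos hε)
    refine ⟨min δ₁ δ₂, lt_min hδ₁ hδ₂, fun q hq => ?_⟩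
    have h₁ := hu q (hq.trans_le (min_le_left _ _))
    have h₂ := hv q (hq.trans_le (min_le_right _ _))
    calc |(u + v) q| ≤ |u q| + |v q| := abs_add_le _ _
      _ ≤ ε := by linarith
  smul_mem' c u hu ε hε := by
    obtain ⟨δ, hδ, hu⟩ := hu (ε / (|c| + 1)) (by positivity)
    refine ⟨δ, hδ, fun q hq => ?_⟩
    calc |(c • u) q| = |c| * |u q| := by simp [abs_mul]
      _ ≤ |c| * (ε / (|c| + 1)) := mul_le_mul_of_nonneg_left (hu q hq) (abs_nonneg c)
      _ ≤ ε := abs_mul_div_abs_add_one_le c hε.le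

noncomputable def bandCutoff (a b : ℝ) : OffDiag M →ᵇ ℝ :=
  .ofNormedAddCommGroup (fun q => max 0 (min 1 (min (q.dist / a - 1) (2 - 2 * q.dist / b))))
    (by fun_prop) 1 fun q => by
      rw [Real.norm_eq_abs, abs_of_nonneg (le_max_left _ _)]
      exact max_le zero_le_one (min_le_left _ _)

lemma bandCutoff_nonneg (a b : ℝ) (q : OffDiag M) : 0 ≤ bandCutoff a b q := le_max_left _ _

lemma bandCutoff_le_one (a b : ℝ) (q : OffDiag M) : bandCutoff a b q ≤ 1 :=
  max_le zero_le_one (min_le_left _ _)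

lemma mem_Ioo_of_bandCutoff_ne_zero {a b : ℝ} (ha : 0 < a) (hb : 0 < b) {q : OffDiag M}
    (hq : bandCutoff a b q ≠ 0) : a < q.dist ∧ q.dist < b := by
  by_contra! h
  refine hq (max_eq_left ?_)
  by_cases hqa : a < q.dist
  · have : 2 - 2 * q.dist / b ≤ 0 := by
      rw [sub_nonpos, le_div_iff₀ hb]; linarith [h hqa]
    exact (min_le_right _ _).trans ((min_le_right _ _).trans this)
  · have : q.dist / a - 1 ≤ 0 := by
      rw [sub_nonpos, div_le_one ha]; linarith
    exact (min_le_right _ _).trans ((min_le_left _ _).trans this)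

lemma bandCutoff_eq_one {a b : ℝ} (ha : 0 < a) (hb : 0 < b) {q : OffDiag M}
    (h₁ : 2 * a ≤ q.dist) (h₂ : q.dist ≤ b / 2) : bandCutoff a b q = 1 := by
  have e₁ : 1 ≤ q.dist / a - 1 := by rw [le_sub_iff_add_le, le_div_iff₀ ha]; linarith
  have e₂ : 1 ≤ 2 - 2 * q.dist / b := by
    rw [le_sub_comm, div_le_iff₀ hb]; linarith
  change max 0 (min 1 (min _ _)) = 1
  rw [min_eq_left (le_min e₁ e₂), max_eq_right zero_le_one]

lemma exists_hump_seq (Ψ : (OffDiag M →ᵇ ℝ) →L[ℝ] ℝ) {C η ε : ℝ} (hε : 0 < ε)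
    (hbad : ∀ β > 0, ∃ u ∈ vanishingNearDiag M, ‖u‖ ≤ C ∧
      (∀ q : OffDiag M, β ≤ q.dist → |u q| ≤ ε) ∧ η < |Ψ u|) :
    ∃ (β : ℕ → ℝ) (u : ℕ → OffDiag M →ᵇ ℝ), (∀ k, 0 < β k) ∧ ∀ k, 8 * β (k + 1) ≤ β k ∧
      ‖u k‖ ≤ C ∧ η < Ψ (u k) ∧
      ∀ q : OffDiag M, q.dist < 2 * β (k + 1) ∨ β k / 4 ≤ q.dist → |u k q| ≤ ε := by
  have step : ∀ b : {b : ℝ // 0 < b}, ∃ x : (OffDiag M →ᵇ ℝ) × {b : ℝ // 0 < b},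
      8 * x.2.1 ≤ b ∧ ‖x.1‖ ≤ C ∧ η < Ψ x.1 ∧
      ∀ q : OffDiag M, q.dist < 2 * x.2.1 ∨ b / 4 ≤ q.dist → |x.1 q| ≤ ε := by
    rintro ⟨b, hb⟩
    obtain ⟨u, hu, hu_norm, hu_far, hu_Ψ⟩ := hbad (b / 4) (by positivity)
    obtain ⟨δ, hδ, hu_near⟩ := hu ε hε
    obtain ⟨v, hv_abs, hv_norm, hv_Ψ⟩ :
        ∃ v : OffDiag M →ᵇ ℝ, (∀ q, |v q| = |u q|) ∧ ‖v‖ = ‖u‖ ∧ η < Ψ v := by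
      rcases lt_abs.1 hu_Ψ with h | h
      · exact ⟨u, fun _ => rfl, rfl, h⟩
      · exact ⟨-u, fun q => by simp, norm_neg u, by simpa using h⟩
    refine ⟨(v, ⟨min (δ / 2) (b / 8), by positivity⟩), by linarith [min_le_right (δ / 2) (b / 8)],
      hv_norm ▸ hu_norm, hv_Ψ, fun q hq => ?_⟩
    rw [hv_abs q]
    rcases hq with hq | hq
    · exact hu_near q (hq.trans_le (by linarith [min_le_left (δ / 2) (b / 8)]))
    · exact hu_far q hq
  choose next hnext using step
  let b : ℕ → {b : ℝ // 0 < b} := fun k => Nat.rec ⟨1, one_pos⟩ (fun _ c => (next c).2) k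
  exact ⟨fun k => (b k).1, fun k => (next (b k)).1, fun k => (b k).2, fun k => hnext (b k)⟩

/-- Otherwise there are `u k` with `Ψ (u k) > η` that essentially live in disjoint bands
`β (k + 1) < q.dist < β k / 2`: cut off to those bands, their partial sums stay in the ball of
radius `C` while `Ψ` of them grows linearly (gliding hump). -/
lemma exists_abs_apply_le_of_mem_vanishingNearDiag (Ψ : (OffDiag M →ᵇ ℝ) →L[ℝ] ℝ) (C : ℝ)
    {η : ℝ} (hη : 0 < η) :
    ∃ β > 0, ∃ ε > 0, ∀ u ∈ vanishingNearDiag M, ‖u‖ ≤ C →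
      (∀ q : OffDiag M, β ≤ q.dist → |u q| ≤ ε) → |Ψ u| ≤ η := by
  by_contra! hbad
  set ε := η / (2 * (‖Ψ‖ + 1))
  have hε : 0 < ε := by positivity
  have hΨε : ‖Ψ‖ * ε ≤ η / 2 := by
    rw [mul_div_assoc', div_le_div_iff₀ (by positivity) two_pos]; nlinarith [norm_nonneg Ψ]
  obtain ⟨β, u, hβ, hu⟩ := exists_hump_seq Ψ hε (hbad · · ε hε)
  have hβ_anti : Antitone β := antitone_nat_of_succ_le fun k => by linarith [hu k, hβ (k + 1)]
  have hC : 0 ≤ C := (norm_nonneg _).trans (hu 0).2.1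
  set v : ℕ → OffDiag M →ᵇ ℝ := fun k => bandCutoff (β (k + 1)) (β k / 2) * u k
  have hv_apply : ∀ k q, v k q = bandCutoff (β (k + 1)) (β k / 2) q * u k q := fun _ _ => rfl
  have hsum_norm : ∀ m, ‖∑ k ∈ range m, v k‖ ≤ C := fun m => by
    refine (norm_le hC).2 fun q => ?_
    rw [Real.norm_eq_abs, BoundedContinuousFunction.coe_sum, Finset.sum_apply]
    refine abs_sum_range_le_of_subsingleton_support hC (fun k => ?_) ?_ m
    · rw [hv_apply, abs_mul, abs_of_nonneg (bandCutoff_nonneg _ _ _)]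
      exact (mul_le_of_le_one_left (abs_nonneg _) (bandCutoff_le_one _ _ _)).trans
        (((u k).norm_coe_le_norm q).trans (hu k).2.1)
    · intro j hj k hk
      have hj := mem_Ioo_of_bandCutoff_ne_zero (hβ _) (by linarith [hβ j]) (left_ne_zero_of_mul hj)
      have hk := mem_Ioo_of_bandCutoff_ne_zero (hβ _) (by linarith [hβ k]) (left_ne_zero_of_mul hk)
      by_contra hjk
      rcases lt_or_gt_of_ne hjk with h | h
      · linarith [hβ_anti (Nat.succ_le_of_lt h), hβ (j + 1)]
      · linarith [hβ_anti (Nat.succ_le_of_lt h), hβ (k + 1)]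
  have hv_Ψ : ∀ k, η / 2 ≤ Ψ (v k) := fun k => by
    have hdiff : ‖v k - u k‖ ≤ ε := by
      refine (norm_le hε.le).2 fun q => ?_
      rw [Real.norm_eq_abs, BoundedContinuousFunction.coe_sub, Pi.sub_apply, hv_apply,
        ← sub_one_mul, abs_mul]
      by_cases hq : q.dist < 2 * β (k + 1) ∨ β k / 4 ≤ q.dist
      · have : |bandCutoff (β (k + 1)) (β k / 2) q - 1| ≤ 1 := by
          rw [abs_le]; constructor <;> linarith [bandCutoff_nonneg (β (k + 1)) (β k / 2) q,
            bandCutoff_le_one (β (k + 1)) (β k / 2) q]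
        exact (mul_le_of_le_one_left (abs_nonneg _) this).trans ((hu k).2.2.2 q hq)
      · push Not at hq
        rw [bandCutoff_eq_one (hβ _) (by linarith [hβ k]) hq.1 (by linarith [hq.2])]
        simpa using hε.le
    have habs : |Ψ (v k - u k)| ≤ ‖Ψ‖ * ε :=
      (Ψ.le_opNorm _).trans (mul_le_mul_of_nonneg_left hdiff (norm_nonneg Ψ))
    rw [map_sub] at habs
    linarith [(hu k).2.2.1, neg_abs_le (Ψ (v k) - Ψ (u k))]
  obtain ⟨m, hm⟩ := exists_nat_gt (‖Ψ‖ * C / (η / 2))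
  have hlow : m * (η / 2) ≤ Ψ (∑ k ∈ range m, v k) := by
    rw [map_sum]
    simpa using sum_le_sum fun k (_ : k ∈ range m) => hv_Ψ k
  have hup := (le_abs_self _).trans ((Ψ.le_opNorm _).trans
    (mul_le_mul_of_nonneg_left (hsum_norm m) (norm_nonneg Ψ)))
  rw [div_lt_iff₀ (by positivity)] at hm
  linarith

end GlidingHump

section Projection

variable {M : Type*} [MetricSpace M] {S : Submodule ℝ (OffDiag M →ᵇ ℝ)}

local notation "B" => OffDiag M →ᵇ ℝ

lemma exists_abs_apply_le_of_coe_mem_vanishingNearDiag (φ : NormedDual S) (C : ℝ) {η : ℝ}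
    (hη : 0 < η) :
    ∃ β > 0, ∃ ε > 0, ∀ h : S, (h : B) ∈ vanishingNearDiag M → ‖h‖ ≤ C →
      (∀ q : OffDiag M, β ≤ q.dist → |(h : B) q| ≤ ε) → |φ h| ≤ η := by
  obtain ⟨Ψ, hΨ, -⟩ := exists_extension_norm_eq S φ
  obtain ⟨β, hβ, ε, hε, H⟩ := exists_abs_apply_le_of_mem_vanishingNearDiag Ψ C hη
  exact ⟨β, hβ, ε, hε, fun h hh hC hfar => hΨ h ▸ H h hh hC hfar⟩

variable (S) in
def HasNearDiagApprox : Prop :=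
  ∀ h : S, ∀ β > 0, ∀ ε > 0, ∃ e : S, (e : B) ∈ vanishingNearDiag M ∧ ‖e‖ ≤ ‖h‖ ∧
    ∀ q : OffDiag M, β ≤ q.dist → |(h : B) q - (e : B) q| ≤ ε

structure IsNearDiagApprox (h : S) (e : ℕ → S) : Prop where
  mem : ∀ n, (e n : B) ∈ vanishingNearDiag M
  bdd : ∃ C, ∀ n, ‖e n‖ ≤ C
  tendsto : ∀ β > 0, TendstoUniformlyOn (fun n => ⇑(e n : B)) (h : B) atTop {q | β ≤ q.dist}

namespace IsNearDiagApprox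

lemma const {h : S} (hh : (h : B) ∈ vanishingNearDiag M) : IsNearDiagApprox h fun _ => h :=
  ⟨fun _ => hh, ⟨‖h‖, fun _ => le_rfl⟩, fun _ _ =>
    Metric.tendstoUniformlyOn_iff.2 fun ε hε => .of_forall fun _ _ _ => by simpa using hε⟩

lemma add {h₁ h₂ : S} {e₁ e₂ : ℕ → S} (he₁ : IsNearDiagApprox h₁ e₁)
    (he₂ : IsNearDiagApprox h₂ e₂) : IsNearDiagApprox (h₁ + h₂) (e₁ + e₂) := by
  obtain ⟨C₁, hC₁⟩ := he₁.bdd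
  obtain ⟨C₂, hC₂⟩ := he₂.bdd
  refine ⟨fun n => add_mem (he₁.mem n) (he₂.mem n),
    ⟨C₁ + C₂, fun n => (norm_add_le (e₁ n) (e₂ n)).trans (add_le_add (hC₁ n) (hC₂ n))⟩,
    fun β hβ => (he₁.tendsto β hβ).add (he₂.tendsto β hβ)⟩

lemma smul {h : S} {e : ℕ → S} (he : IsNearDiagApprox h e) (c : ℝ) :
    IsNearDiagApprox (c • h) (c • e) := by
  obtain ⟨C, hC⟩ := he.bdd
  refine ⟨fun n => Submodule.smul_mem _ c (he.mem n),
    ⟨‖c‖ * C, fun n => by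
      rw [Pi.smul_apply, Submodule.coe_norm, Submodule.coe_smul, norm_smul, ← Submodule.coe_norm]
      gcongr; exact hC n⟩, fun β hβ => ?_⟩
  simpa [Function.comp_def] using
    (uniformContinuous_const_smul c).comp_tendstoUniformlyOn (he.tendsto β hβ)

lemma tendsto_sub (φ : NormedDual S) {h : S} {e e' : ℕ → S} (he : IsNearDiagApprox h e)
    (he' : IsNearDiagApprox h e') :
    Tendsto (fun mn : ℕ × ℕ => φ (e mn.1) - φ (e' mn.2)) (atTop ×ˢ atTop) (𝓝 0) := by
  obtain ⟨C, hC⟩ := he.bdd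
  obtain ⟨C', hC'⟩ := he'.bdd
  refine Metric.tendsto_nhds.2 fun η hη => ?_
  obtain ⟨β, hβ, ε, hε, H⟩ :=
    exists_abs_apply_le_of_coe_mem_vanishingNearDiag φ (C + C') (half_pos hη)
  have h₁ := Metric.tendstoUniformlyOn_iff.1 (he.tendsto β hβ) (ε / 2) (half_pos hε)
  have h₂ := Metric.tendstoUniformlyOn_iff.1 (he'.tendsto β hβ) (ε / 2) (half_pos hε)
  filter_upwards [h₁.prod_mk h₂] with ⟨m, n⟩ ⟨hm, hn⟩
  rw [Real.dist_eq, sub_zero, ← map_sub]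
  refine (H _ (sub_mem (he.mem m) (he'.mem n))
    ((norm_sub_le (e m) (e' n)).trans (add_le_add (hC m) (hC' n))) fun q hq => ?_).trans_lt
      (half_lt_self hη)
  have hm := hm q hq
  have hn := hn q hq
  rw [Real.dist_eq] at hm hn
  simp only [Submodule.coe_sub, BoundedContinuousFunction.coe_sub, Pi.sub_apply]
  calc |(e m : B) q - (e' n : B) q| ≤ |(h : B) q - (e m : B) q| + |(h : B) q - (e' n : B) q| := by
        rw [abs_sub_comm ((h : B) q)]; exact abs_sub_le _ _ _
    _ ≤ ε := by linarith

end IsNearDiagApprox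

namespace HasNearDiagApprox

variable (hS : HasNearDiagApprox S)

noncomputable def approxSeq (h : S) (n : ℕ) : S :=
  (hS h (1 / (n + 1)) (by positivity) (1 / (n + 1)) (by positivity)).choose

lemma isNearDiagApprox_approxSeq (h : S) : IsNearDiagApprox h (hS.approxSeq h) := by
  have spec := fun n : ℕ =>
    (hS h (1 / (n + 1)) (by positivity) (1 / (n + 1)) (by positivity)).choose_spec
  refine ⟨fun n => (spec n).1, ⟨‖h‖, fun n => (spec n).2.1⟩, fun β hβ => ?_⟩
  refine Metric.tendstoUniformlyOn_iff.2 fun ε hε => ?_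
  filter_upwards [tendsto_one_div_add_atTop_nhds_zero_nat.eventually
    (gt_mem_nhds (lt_min hβ hε))] with n hn q hq
  rw [Real.dist_eq]
  exact ((spec n).2.2 q ((hn.le.trans (min_le_left _ _)).trans hq)).trans_lt
    (hn.trans_le (min_le_right _ _))

lemma norm_approxSeq_le (h : S) (n : ℕ) : ‖hS.approxSeq h n‖ ≤ ‖h‖ :=
  (hS h (1 / (n + 1)) (by positivity) (1 / (n + 1)) (by positivity)).choose_spec.2.1

noncomputable def proj (φ : NormedDual S) (h : S) : ℝ :=
  limUnder atTop fun n => φ (hS.approxSeq h n)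

lemma tendsto_proj (φ : NormedDual S) (h : S) :
    Tendsto (fun n => φ (hS.approxSeq h n)) atTop (𝓝 (hS.proj φ h)) := by
  refine CauchySeq.tendsto_limUnder (cauchySeq_iff_tendsto_dist_atTop_0.2 ?_)
  have := ((hS.isNearDiagApprox_approxSeq h).tendsto_sub φ (hS.isNearDiagApprox_approxSeq h)).abs
  rw [abs_zero] at this
  rw [← prod_atTop_atTop_eq]
  simpa [Real.dist_eq] using this

lemma tendsto_proj_of_isNearDiagApprox (φ : NormedDual S) {h : S} {e : ℕ → S}
    (he : IsNearDiagApprox h e) : Tendsto (fun n => φ (e n)) atTop (𝓝 (hS.proj φ h)) := by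
  have := ((he.tendsto_sub φ (hS.isNearDiagApprox_approxSeq h)).comp
    (tendsto_id.prodMk tendsto_id)).add (hS.tendsto_proj φ h)
  simpa using this

lemma proj_eq_of_mem (φ : NormedDual S) {h : S} (hh : (h : B) ∈ vanishingNearDiag M) :
    hS.proj φ h = φ h :=
  tendsto_nhds_unique (hS.tendsto_proj_of_isNearDiagApprox φ (.const hh)) tendsto_const_nhds

lemma proj_add_left (φ₁ φ₂ : NormedDual S) (h : S) :
    hS.proj (φ₁ + φ₂) h = hS.proj φ₁ h + hS.proj φ₂ h :=
  tendsto_nhds_unique (hS.tendsto_proj _ h) ((hS.tendsto_proj φ₁ h).add (hS.tendsto_proj φ₂ h))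

lemma proj_smul_left (c : ℝ) (φ : NormedDual S) (h : S) : hS.proj (c • φ) h = c • hS.proj φ h :=
  tendsto_nhds_unique (hS.tendsto_proj _ h) ((hS.tendsto_proj φ h).const_mul c)

lemma proj_add_right (φ : NormedDual S) (h₁ h₂ : S) :
    hS.proj φ (h₁ + h₂) = hS.proj φ h₁ + hS.proj φ h₂ := by
  refine tendsto_nhds_unique (hS.tendsto_proj_of_isNearDiagApprox φ
    ((hS.isNearDiagApprox_approxSeq h₁).add (hS.isNearDiagApprox_approxSeq h₂))) ?_
  simpa using (hS.tendsto_proj φ h₁).add (hS.tendsto_proj φ h₂)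

lemma proj_smul_right (c : ℝ) (φ : NormedDual S) (h : S) :
    hS.proj φ (c • h) = c • hS.proj φ h := by
  refine tendsto_nhds_unique (hS.tendsto_proj_of_isNearDiagApprox φ
    ((hS.isNearDiagApprox_approxSeq h).smul c)) ?_
  simpa using (hS.tendsto_proj φ h).const_mul c

lemma abs_proj_le (φ : NormedDual S) (h : S) : |hS.proj φ h| ≤ ‖φ‖ * ‖h‖ :=
  le_of_tendsto' (hS.tendsto_proj φ h).abs fun n =>
    (φ.le_opNorm _).trans (mul_le_mul_of_nonneg_left (hS.norm_approxSeq_le h n) (norm_nonneg φ))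

noncomputable def projCLM : NormedDual S →L[ℝ] NormedDual S :=
  LinearMap.mkContinuous₂ (LinearMap.mk₂ ℝ hS.proj hS.proj_add_left hS.proj_smul_left
    hS.proj_add_right hS.proj_smul_right) 1 fun φ h => by simpa using hS.abs_proj_le φ h

lemma projCLM_apply (φ : NormedDual S) (h : S) : hS.projCLM φ h = hS.proj φ h := rfl

lemma projCLM_projCLM (φ : NormedDual S) : hS.projCLM (hS.projCLM φ) = hS.projCLM φ := by
  ext h
  refine tendsto_nhds_unique (hS.tendsto_proj _ h) ?_
  simpa only [projCLM_apply, hS.proj_eq_of_mem _ ((hS.isNearDiagApprox_approxSeq h).mem _)]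
    using hS.tendsto_proj φ h

lemma projCLM_eq_zero_iff (φ : NormedDual S) :
    hS.projCLM φ = 0 ↔ ∀ h : S, (h : B) ∈ vanishingNearDiag M → φ h = 0 := by
  refine ⟨fun hφ h hh => ?_, fun hφ => ?_⟩
  · rw [← hS.proj_eq_of_mem φ hh, ← projCLM_apply, hφ]
    rfl
  · ext h
    show hS.proj φ h = 0
    refine tendsto_nhds_unique (hS.tendsto_proj φ h) ?_
    simpa only [hφ _ ((hS.isNearDiagApprox_approxSeq h).mem _)] using tendsto_const_nhds

lemma exists_abs_proj_le (φ : NormedDual S) (C : ℝ) {η : ℝ} (hη : 0 < η) :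
    ∃ β > 0, ∃ ε > 0, ∀ h : S, ‖h‖ ≤ C →
      (∀ q : OffDiag M, β ≤ q.dist → |(h : B) q| ≤ ε) → |hS.proj φ h| ≤ η := by
  obtain ⟨β, hβ, ε, hε, H⟩ := exists_abs_apply_le_of_coe_mem_vanishingNearDiag φ C hη
  refine ⟨β, hβ, ε / 2, half_pos hε, fun h hC hfar => ?_⟩
  have happrox := hS.isNearDiagApprox_approxSeq h
  refine le_of_tendsto (hS.tendsto_proj φ h).abs ?_
  filter_upwards [Metric.tendstoUniformlyOn_iff.1 (happrox.tendsto β hβ) (ε / 2) (half_pos hε)]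
    with n hn
  refine H _ (happrox.mem n) ((hS.norm_approxSeq_le h n).trans hC) fun q hq => ?_
  have := hn q hq
  rw [Real.dist_eq] at this
  linarith [hfar q hq, abs_sub_abs_le_abs_sub ((hS.approxSeq h n : B) q) ((h : B) q),
    abs_sub_comm ((h : B) q) ((hS.approxSeq h n : B) q)]

lemma exists_mem_norm_le_one_le_apply (φ : NormedDual S) {η : ℝ} (hη : 0 < η) :
    ∃ e : S, (e : B) ∈ vanishingNearDiag M ∧ ‖e‖ ≤ 1 ∧ ‖hS.projCLM φ‖ - 2 * η ≤ φ e := by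
  obtain ⟨h, hh, hPh⟩ := (hS.projCLM φ).exists_norm_le_one_le_apply hη
  obtain ⟨n, hn⟩ := ((hS.tendsto_proj φ h).eventually (lt_mem_nhds (sub_lt_self _ hη))).exists
  refine ⟨hS.approxSeq h n, (hS.isNearDiagApprox_approxSeq h).mem n,
    (hS.norm_approxSeq_le h n).trans hh, ?_⟩
  rw [projCLM_apply] at hPh
  linarith

lemma exists_approx_chain (hS : HasNearDiagApprox S) (w : S) {ρ δ : ℝ} (hρ : 0 < ρ)
    (hδ : 0 < δ) :
    ∃ (g : ℕ → S) (Δ : ℕ → ℝ), Antitone Δ ∧ Δ 0 ≤ δ ∧ ∀ i, (g i : B) ∈ vanishingNearDiag M ∧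
      ‖g i‖ ≤ ‖w‖ ∧ (∀ q : OffDiag M, Δ i ≤ q.dist → |(w : B) q - (g i : B) q| ≤ ρ) ∧
      ∀ q : OffDiag M, q.dist < Δ (i + 1) → |(g i : B) q| ≤ ρ := by
  have step : ∀ d : {d : ℝ // 0 < d}, ∃ x : S × {d : ℝ // 0 < d}, x.2.1 ≤ d ∧
      (x.1 : B) ∈ vanishingNearDiag M ∧ ‖x.1‖ ≤ ‖w‖ ∧
      (∀ q : OffDiag M, d ≤ q.dist → |(w : B) q - (x.1 : B) q| ≤ ρ) ∧
      ∀ q : OffDiag M, q.dist < x.2.1 → |(x.1 : B) q| ≤ ρ := by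
    rintro ⟨d, hd⟩
    obtain ⟨g, hg, hg_norm, hg_far⟩ := hS w d hd ρ hρ
    obtain ⟨d', hd', hg_near⟩ := hg ρ hρ
    exact ⟨(g, ⟨min d d', lt_min hd hd'⟩), min_le_left _ _, hg, hg_norm, hg_far,
      fun q hq => hg_near q (hq.trans_le (min_le_right _ _))⟩
  choose next hnext using step
  let D : ℕ → {d : ℝ // 0 < d} := fun i => Nat.rec ⟨δ, hδ⟩ (fun _ d => (next d).2) i
  exact ⟨fun i => (next (D i)).1, fun i => (D i).1,
    antitone_nat_of_succ_le fun i => (hnext (D i)).1, le_rfl, fun i => (hnext (D i)).2⟩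

/-- Averaging `n` members of an approximation chain: each point of `L` lies in the transition zone
of at most one of them, which costs only `1 / n` in the sup norm. -/
lemma exists_sub_mem_vanishingNearDiag_abs_le (hS : HasNearDiagApprox S) (w : S) (hw : ‖w‖ ≤ 1)
    {n : ℕ} (hn : 0 < n) {ρ δ : ℝ} (hρ : 0 < ρ) (hδ : 0 < δ) :
    ∃ y : S, ((w - y : S) : B) ∈ vanishingNearDiag M ∧
      (∀ q : OffDiag M, |(y : B) q| ≤ 1 + ρ + 1 / n) ∧
      ∀ q : OffDiag M, δ ≤ q.dist → |(y : B) q| ≤ ρ := by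
  obtain ⟨g, Δ, hΔ, hΔδ, hg⟩ := hS.exists_approx_chain w hρ hδ
  have hn' : (0 : ℝ) < n := Nat.cast_pos.2 hn
  set y : S := w - (n : ℝ)⁻¹ • ∑ i ∈ range n, g i
  have hy : ∀ q, (y : B) q = (∑ i ∈ range n, ((w : B) q - (g i : B) q)) / n := fun q => by
    simp [y, sum_sub_distrib]
    field_simp
  have hy_le : ∀ q C, ∑ i ∈ range n, |(w : B) q - (g i : B) q| ≤ n * C → |(y : B) q| ≤ C :=
    fun q C h => by
      rw [hy, abs_div, abs_of_pos hn', div_le_iff₀ hn', mul_comm]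
      exact (abs_sum_le_sum_abs _ _).trans h
  refine ⟨y, ?_, fun q => hy_le q _ ?_, fun q hq => hy_le q _ ?_⟩
  · simpa [y] using Submodule.smul_mem _ (n : ℝ)⁻¹
      (Submodule.sum_mem (vanishingNearDiag M) fun i (_ : i ∈ range n) => (hg i).1)
  · have hwq : |(w : B) q| ≤ 1 := ((w : B).norm_coe_le_norm q).trans hw
    have hgq : ∀ i, |(g i : B) q| ≤ 1 := fun i =>
      ((g i : B).norm_coe_le_norm q).trans ((hg i).2.1.trans hw)
    refine (sum_range_le_of_antitone hΔ (r := q.dist) (A := 1 + ρ) zero_le_one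
      (fun i => ?_) (fun i hi => ?_) n).trans_eq (by field_simp)
    · linarith [abs_sub ((w : B) q) ((g i : B) q), hgq i]
    · rcases hi with hi | hi
      · linarith [abs_sub ((w : B) q) ((g i : B) q), (hg i).2.2.2 q hi]
      · linarith [(hg i).2.2.1 q hi]
  · refine (sum_le_sum fun i _ =>
      (hg i).2.2.1 q ((hΔ (Nat.zero_le i)).trans (hΔδ.trans hq))).trans ?_
    simp

lemma norm_projCLM_add_norm_sub_le (φ : NormedDual S) {n : ℕ} (hn : 0 < n) {η : ℝ}
    (hη : 0 < η) :
    ‖hS.projCLM φ‖ + ‖φ - hS.projCLM φ‖ ≤ ‖φ‖ * (1 + 1 / n + 2 * η) + 4 * η := by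
  obtain ⟨e, he, he_norm, he_φ⟩ := hS.exists_mem_norm_le_one_le_apply φ hη
  obtain ⟨δ, hδ, he_near⟩ := he η hη
  obtain ⟨w, hw, hw_σ⟩ := (φ - hS.projCLM φ).exists_norm_le_one_le_apply hη
  obtain ⟨β, hβ, ε, hε, hP_small⟩ := hS.exists_abs_proj_le φ (2 + η) hη
  obtain ⟨y, hwy, hy, hy_far⟩ := hS.exists_sub_mem_vanishingNearDiag_abs_le w hw hn
    (lt_min hη hε) (lt_min hδ hβ)
  have hn₀ : 0 ≤ 1 / (n : ℝ) := by positivity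
  have hn₁ : 1 / (n : ℝ) ≤ 1 := by rw [div_le_one (by positivity)]; exact_mod_cast hn
  have hρ : min η ε ≤ η := min_le_left _ _
  have hy_norm : ‖y‖ ≤ 2 + η := by
    rw [Submodule.coe_norm]
    exact (norm_le (by positivity)).2 fun q => (hy q).trans (by linarith)
  have hPy : |hS.projCLM φ y| ≤ η := hP_small y hy_norm fun q hq =>
    (hy_far q ((min_le_right _ _).trans hq)).trans (min_le_right _ _)
  have hx : ‖e + y‖ ≤ 1 + 1 / n + 2 * η := by
    rw [Submodule.coe_norm]
    refine (norm_le (by positivity)).2 fun q => ?_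
    rw [Submodule.coe_add, BoundedContinuousFunction.coe_add, Pi.add_apply, Real.norm_eq_abs]
    refine (abs_add_le _ _).trans ?_
    rcases lt_or_ge q.dist (min δ β) with hq | hq
    · linarith [he_near q (hq.trans_le (min_le_left _ _)), hy q]
    · have he_q : |(e : B) q| ≤ 1 := ((e : B).norm_coe_le_norm q).trans he_norm
      linarith [hy_far q hq]
  have hσy : φ w - φ y = hS.projCLM φ w - hS.projCLM φ y := by
    rw [← map_sub, ← map_sub]
    exact (hS.proj_eq_of_mem φ hwy).symm
  have hσw : (φ - hS.projCLM φ) w = φ w - hS.projCLM φ w := rfl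
  have hφx : |φ (e + y)| ≤ ‖φ‖ * ‖e + y‖ := φ.le_opNorm (e + y)
  calc ‖hS.projCLM φ‖ + ‖φ - hS.projCLM φ‖ ≤ φ (e + y) - hS.projCLM φ y + 3 * η := by
        rw [map_add]
        linarith
    _ ≤ ‖φ‖ * ‖e + y‖ + 4 * η := by
        linarith [le_abs_self (φ (e + y)), neg_abs_le (hS.projCLM φ y)]
    _ ≤ ‖φ‖ * (1 + 1 / n + 2 * η) + 4 * η := by gcongr

lemma norm_eq_norm_projCLM_add_norm_sub (φ : NormedDual S) :
    ‖φ‖ = ‖hS.projCLM φ‖ + ‖φ - hS.projCLM φ‖ := by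
  refine le_antisymm ((norm_add_le _ _).trans_eq' (by rw [add_sub_cancel])) ?_
  have h₀ := tendsto_one_div_add_atTop_nhds_zero_nat (𝕜 := ℝ)
  have hlim : Tendsto (fun n : ℕ => ‖φ‖ * (1 + 1 / ((n : ℝ) + 1) + 2 * (1 / ((n : ℝ) + 1))) +
      4 * (1 / ((n : ℝ) + 1))) atTop (𝓝 (‖φ‖ * (1 + 0 + 2 * 0) + 4 * 0)) :=
    (((h₀.const_add 1).add (h₀.const_mul 2)).const_mul ‖φ‖).add (h₀.const_mul 4)
  rw [mul_zero, add_zero, add_zero, mul_zero, add_zero, mul_one] at hlim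
  refine ge_of_tendsto' hlim fun n => ?_
  simpa using
    hS.norm_projCLM_add_norm_sub_le φ n.succ_pos (η := 1 / ((n : ℝ) + 1)) (by positivity)

theorem isMIdeal (hS : HasNearDiagApprox S) :
    IsMIdeal {h : S | (h : B) ∈ vanishingNearDiag M} :=
  ⟨hS.projCLM, hS.projCLM_projCLM, hS.projCLM_eq_zero_iff, hS.norm_eq_norm_projCLM_add_norm_sub⟩

end HasNearDiagApprox

end Projection

section DeLeeuw

variable {M : Type*} [MetricSpace M]

lemma LittleLip.const_mul {f : M → ℝ} (hf : LittleLip f) (c : ℝ) : LittleLip fun t => c * f t := by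
  intro ε hε
  obtain ⟨δ, hδ, hf⟩ := hf (ε / (|c| + 1)) (by positivity)
  refine ⟨δ, hδ, fun s t hst => ?_⟩
  calc |c * f s - c * f t| = |c| * |f s - f t| := by rw [← mul_sub, abs_mul]
    _ ≤ |c| * (ε / (|c| + 1) * dist s t) := mul_le_mul_of_nonneg_left (hf s t hst) (abs_nonneg c)
    _ ≤ ε * dist s t := by
      rw [← mul_assoc]
      exact mul_le_mul_of_nonneg_right (abs_mul_div_abs_add_one_le c hε.le) dist_nonneg

lemma continuous_of_abs_sub_le_mul_dist {F : M → ℝ} {K : ℝ}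
    (hF : ∀ s t, |F s - F t| ≤ K * dist s t) : Continuous F :=
  (LipschitzWith.of_dist_le_mul fun s t => (hF s t).trans
    (mul_le_mul_of_nonneg_right (Real.le_coe_toNNReal K) dist_nonneg)).continuous

noncomputable def deLeeuw (F : M → ℝ) {K : ℝ} (hF : ∀ s t, |F s - F t| ≤ K * dist s t) :
    OffDiag M →ᵇ ℝ :=
  .ofNormedAddCommGroup (fun q => (F q.1.1 - F q.1.2) / dist q.1.1 q.1.2)
    (have hc := continuous_of_abs_sub_le_mul_dist hF
    ((hc.comp (continuous_fst.comp continuous_subtype_val)).sub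
      (hc.comp (continuous_snd.comp continuous_subtype_val))).div OffDiag.continuous_dist
      fun q => (OffDiag.dist_pos q).ne')
    K fun q => by
      rw [Real.norm_eq_abs, abs_div, abs_of_pos (dist_pos.2 q.2), div_le_iff₀ (dist_pos.2 q.2)]
      exact hF _ _

lemma deLeeuw_apply (F : M → ℝ) {K : ℝ} (hF : ∀ s t, |F s - F t| ≤ K * dist s t)
    (q : OffDiag M) : deLeeuw F hF q = (F q.1.1 - F q.1.2) / dist q.1.1 q.1.2 := rfl

lemma norm_deLeeuw_le {F : M → ℝ} {K : ℝ} (hF : ∀ s t, |F s - F t| ≤ K * dist s t)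
    (hK : 0 ≤ K) : ‖deLeeuw F hF‖ ≤ K :=
  norm_ofNormedAddCommGroup_le _ hK _

lemma deLeeuw_mem_deLeeuwSubmodule {p : M} {F : M → ℝ} (hFp : F p = 0) {K : ℝ}
    (hF : ∀ s t, |F s - F t| ≤ K * dist s t) : deLeeuw F hF ∈ deLeeuwSubmodule M p :=
  ⟨F, hFp, ⟨K, hF⟩, fun _ => rfl⟩

lemma deLeeuw_mem_vanishingNearDiag {F : M → ℝ} (hF' : LittleLip F) {K : ℝ}
    (hF : ∀ s t, |F s - F t| ≤ K * dist s t) : deLeeuw F hF ∈ vanishingNearDiag M := by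
  intro ε hε
  obtain ⟨δ, hδ, hF'⟩ := hF' ε hε
  refine ⟨δ, hδ, fun q hq => ?_⟩
  rw [deLeeuw_apply, abs_div, abs_of_pos (dist_pos.2 q.2), div_le_iff₀ (dist_pos.2 q.2)]
  exact hF' _ _ hq

lemma abs_sub_le_norm_mul_dist {F : M → ℝ} {h : OffDiag M →ᵇ ℝ}
    (hF : ∀ q : OffDiag M, h q = (F q.1.1 - F q.1.2) / dist q.1.1 q.1.2) (s t : M) :
    |F s - F t| ≤ ‖h‖ * dist s t := by
  rcases eq_or_ne s t with rfl | hst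
  · simp
  have := h.norm_coe_le_norm ⟨(s, t), hst⟩
  rwa [hF, Real.norm_eq_abs, abs_div, abs_of_pos (dist_pos.2 hst), div_le_iff₀ (dist_pos.2 hst)]
    at this

/-- Condition (B'). -/
def LittleLipDenseInBall (p : M) : Prop :=
  ∀ F : M → ℝ, F p = 0 → (∀ s t : M, |F s - F t| ≤ dist s t) → ∀ ε > (0 : ℝ),
    ∃ f : M → ℝ, f p = 0 ∧ LittleLip f ∧ (∀ s t : M, |f s - f t| ≤ dist s t) ∧
      ∀ t : M, |f t - F t| ≤ ε

namespace LittleLipDenseInBall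

variable {p : M}

lemma exists_approx (hB : LittleLipDenseInBall p) {F : M → ℝ} (hFp : F p = 0) {K : ℝ}
    (hK : 0 ≤ K) (hF : ∀ s t, |F s - F t| ≤ K * dist s t) {ε : ℝ} (hε : 0 < ε) :
    ∃ f : M → ℝ, f p = 0 ∧ LittleLip f ∧ (∀ s t, |f s - f t| ≤ K * dist s t) ∧
      ∀ t, |f t - F t| ≤ ε := by
  rcases hK.eq_or_lt with rfl | hK
  · refine ⟨F, hFp, fun η hη => ⟨1, one_pos, fun s t _ => (hF s t).trans ?_⟩, hF,
      fun t => by simpa using hε.le⟩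
    rw [zero_mul]
    exact mul_nonneg hη.le dist_nonneg
  obtain ⟨f, hfp, hf, hf_lip, hf_close⟩ := hB (fun t => F t / K) (by simp [hFp])
    (fun s t => by rw [← sub_div, abs_div, abs_of_pos hK, div_le_iff₀ hK, mul_comm]; exact hF s t)
    (ε / K) (by positivity)
  refine ⟨fun t => K * f t, by simp [hfp], hf.const_mul K, fun s t => ?_, fun t => ?_⟩
  · rw [← mul_sub, abs_mul, abs_of_pos hK]
    exact mul_le_mul_of_nonneg_left (hf_lip s t) hK.le
  · calc |K * f t - F t| = K * |f t - F t / K| := by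
          rw [← abs_of_pos hK, ← abs_mul, abs_of_pos hK, mul_sub, mul_div_cancel₀ _ hK.ne']
      _ ≤ K * (ε / K) := mul_le_mul_of_nonneg_left (hf_close t) hK.le
      _ = ε := mul_div_cancel₀ _ hK.ne'

lemma hasNearDiagApprox_deLeeuwSubmodule (hB : LittleLipDenseInBall p) :
    HasNearDiagApprox (deLeeuwSubmodule M p) := by
  intro h β hβ ε hε
  obtain ⟨F, hFp, -, hF⟩ := h.2
  obtain ⟨f, hfp, hf, hf_lip, hf_close⟩ := hB.exists_approx hFp (norm_nonneg _)
    (abs_sub_le_norm_mul_dist hF) (half_pos (mul_pos hβ hε))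
  refine ⟨⟨deLeeuw f hf_lip, deLeeuw_mem_deLeeuwSubmodule hfp hf_lip⟩,
    deLeeuw_mem_vanishingNearDiag hf hf_lip, norm_deLeeuw_le hf_lip (norm_nonneg _), fun q hq => ?_⟩
  have hq₀ : 0 < dist q.1.1 q.1.2 := dist_pos.2 q.2
  show |(h : OffDiag M →ᵇ ℝ) q - deLeeuw f hf_lip q| ≤ ε
  rw [hF, deLeeuw_apply, ← sub_div, abs_div, abs_of_pos hq₀, div_le_iff₀ hq₀]
  calc |F q.1.1 - F q.1.2 - (f q.1.1 - f q.1.2)| ≤ |f q.1.1 - F q.1.1| + |f q.1.2 - F q.1.2| := by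
        rw [show F q.1.1 - F q.1.2 - (f q.1.1 - f q.1.2)
          = (f q.1.2 - F q.1.2) - (f q.1.1 - F q.1.1) by ring]
        exact (abs_sub _ _).trans_eq (add_comm _ _)
    _ ≤ β * ε := by linarith [hf_close q.1.1, hf_close q.1.2]
    _ ≤ ε * dist q.1.1 q.1.2 := by rw [mul_comm]; exact mul_le_mul_of_nonneg_left hq hε.le

end LittleLipDenseInBall

lemma isCompact_setOf_le_dist [CompactSpace M] (δ : ℝ) (hδ : 0 < δ) :
    IsCompact {q : OffDiag M | δ ≤ q.dist} := by
  rw [Subtype.isCompact_iff]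
  have : Subtype.val '' {q : OffDiag M | δ ≤ q.dist} = {x : M × M | δ ≤ dist x.1 x.2} := by
    ext x
    refine ⟨fun ⟨q, hq, hqx⟩ => hqx ▸ hq, fun hx => ⟨⟨x, fun h => ?_⟩, hx, rfl⟩⟩
    have hx : δ ≤ dist x.1 x.2 := hx
    rw [h, dist_self] at hx
    linarith
  rw [this]
  exact (isClosed_le continuous_const (continuous_fst.dist continuous_snd)).isCompact

lemma zeroAtInfty_iff_mem_vanishingNearDiag [CompactSpace M] (u : OffDiag M →ᵇ ℝ) :
    ZeroAtInfty u ↔ u ∈ vanishingNearDiag M := by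
  refine ⟨fun hu ε hε => ?_, fun hu ε hε => ?_⟩
  · obtain ⟨δ, hδ, hfar⟩ := (hu ε hε).exists_forall_le' OffDiag.continuous_dist.continuousOn
      fun q _ => q.dist_pos
    refine ⟨δ, hδ, fun q hq => le_of_not_ge fun h => ?_⟩
    exact (hfar q (show ε ≤ |u q| from h)).not_gt hq
  · obtain ⟨δ, hδ, hu⟩ := hu (ε / 2) (half_pos hε)
    refine (isCompact_setOf_le_dist δ hδ).of_isClosed_subset
      (isClosed_le continuous_const u.continuous.norm) fun q hq =>
        show δ ≤ q.dist from le_of_not_gt fun h => ?_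
    have hq : ε ≤ |u q| := hq
    linarith [hu q h]

end DeLeeuw

/-- If a compact pointed metric space satisfies condition (B'), then
`λ = Λ ∩ C₀(L)` is an M-ideal in `Λ`, the image of `Lip₀(M)` under the de Leeuw
transform. -/
theorem littleLip_isMIdeal {M : Type*} [MetricSpace M] [CompactSpace M] (p : M)
    (hB' : ∀ F : M → ℝ, F p = 0 → (∀ s t : M, |F s - F t| ≤ dist s t) → ∀ ε > (0 : ℝ),
      ∃ f : M → ℝ, f p = 0 ∧ LittleLip f ∧ (∀ s t : M, |f s - f t| ≤ dist s t) ∧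
        ∀ t : M, |f t - F t| ≤ ε) :
    IsMIdeal {h : ↥(deLeeuwSubmodule M p) |
      ZeroAtInfty (h : BoundedContinuousFunction (OffDiag M) ℝ)} := by
  simp_rw [zeroAtInfty_iff_mem_vanishingNearDiag]
  exact (LittleLipDenseInBall.hasNearDiagApprox_deLeeuwSubmodule hB').isMIdeal
end

section
/- Let (M,d) be a compact metric space with base point p and let P be a countable dense subset of M. Then the following are equivalent: (B) for every Lipschitz F : M → ℝ with F(p) = 0 and ‖F‖_Lip ≤ 1, every finite subset S ⊆ P and every ε > 0 there is a little Lipschitz f with f(p) = 0, ‖f‖_Lip ≤ 1 and |f(t) − F(t)| ≤ ε for all t ∈ S; (B') for every such F and every ε > 0 there is a little Lipschitz f with f(p) = 0, ‖f‖_Lip ≤ 1 and sup_{t∈M} |f(t) − F(t)| ≤ ε. -/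
theorem Dense.exists_finite_subset_forall_exists_dist_lt {X : Type*} [PseudoMetricSpace X]
    [CompactSpace X] {P : Set X} (hP : Dense P) {ε : ℝ} (hε : 0 < ε) :
    ∃ S ⊆ P, S.Finite ∧ ∀ x, ∃ s ∈ S, dist x s < ε := by
  have hcover : (Set.univ : Set X) ⊆ ⋃ q ∈ P, Metric.ball q ε := fun x _ ↦ by
    obtain ⟨q, hxq, hqP⟩ := Metric.dense_iff.mp hP x ε hε
    exact Set.mem_biUnion hqP (Metric.mem_ball_comm.mp hxq)
  obtain ⟨S, hSP, hSfin, hS⟩ :=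
    isCompact_univ.elim_finite_subcover_image (fun q _ ↦ Metric.isOpen_ball) hcover
  exact ⟨S, hSP, hSfin, fun x ↦ by simpa using hS (Set.mem_univ x)⟩

theorem abs_sub_le_abs_sub_add_two_mul_dist {X : Type*} [PseudoMetricSpace X] {f F : X → ℝ}
    (hf : ∀ s t, |f s - f t| ≤ dist s t) (hF : ∀ s t, |F s - F t| ≤ dist s t) (s t : X) :
    |f t - F t| ≤ |f s - F s| + 2 * dist s t :=
  calc |f t - F t| = |(f t - f s) + (f s - F s) + (F s - F t)| := by ring_nf
    _ ≤ |f t - f s| + |f s - F s| + |F s - F t| := abs_add_three _ _ _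
    _ ≤ dist t s + |f s - F s| + dist s t := by gcongr <;> apply_assumption
    _ = |f s - F s| + 2 * dist s t := by rw [dist_comm t s]; ring

theorem conditionB_iff_conditionB'_general {M : Type*} [MetricSpace M] [CompactSpace M] (p : M)
    (P : Set M) (hPd : Dense P) :
    (∀ F : M → ℝ, F p = 0 → (∀ s t : M, |F s - F t| ≤ dist s t) →
        ∀ S : Set M, S ⊆ P → S.Finite → ∀ ε > (0 : ℝ),
          ∃ f : M → ℝ, f p = 0 ∧ LittleLip f ∧ (∀ s t : M, |f s - f t| ≤ dist s t) ∧
            ∀ t ∈ S, |f t - F t| ≤ ε) ↔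
      (∀ F : M → ℝ, F p = 0 → (∀ s t : M, |F s - F t| ≤ dist s t) → ∀ ε > (0 : ℝ),
          ∃ f : M → ℝ, f p = 0 ∧ LittleLip f ∧ (∀ s t : M, |f s - f t| ≤ dist s t) ∧
            ∀ t : M, |f t - F t| ≤ ε) := by
  constructor
  · intro hB F hF0 hF ε hε
    obtain ⟨S, hSP, hSfin, hS⟩ :=
      hPd.exists_finite_subset_forall_exists_dist_lt (by positivity : 0 < ε / 4)
    obtain ⟨f, hf0, hfl, hf, hfS⟩ := hB F hF0 hF S hSP hSfin (ε / 2) (by positivity)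
    refine ⟨f, hf0, hfl, hf, fun t ↦ ?_⟩
    obtain ⟨s, hs, hts⟩ := hS t
    have hft := abs_sub_le_abs_sub_add_two_mul_dist hf hF s t
    linarith [hfS s hs, dist_comm t s]
  · intro hB' F hF0 hF S _ _ ε hε
    obtain ⟨f, hf0, hfl, hf, hfM⟩ := hB' F hF0 hF ε hε
    exact ⟨f, hf0, hfl, hf, fun t _ ↦ hfM t⟩

/-- For a compact pointed metric space with a countable dense subset `P`, condition (B)
(approximation of unit-ball Lipschitz functions by unit-ball little Lipschitz functions
pointwise on finite subsets of `P`) is equivalent to condition (B') (approximation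
uniformly on `M`). -/
theorem conditionB_iff_conditionB' {M : Type*} [MetricSpace M] [CompactSpace M] (p : M)
    (P : Set M) (hPc : P.Countable) (hPd : Dense P) :
    (∀ F : M → ℝ, F p = 0 → (∀ s t : M, |F s - F t| ≤ dist s t) →
        ∀ S : Set M, S ⊆ P → S.Finite → ∀ ε > (0 : ℝ),
          ∃ f : M → ℝ, f p = 0 ∧ LittleLip f ∧ (∀ s t : M, |f s - f t| ≤ dist s t) ∧
            ∀ t ∈ S, |f t - F t| ≤ ε) ↔
      (∀ F : M → ℝ, F p = 0 → (∀ s t : M, |F s - F t| ≤ dist s t) → ∀ ε > (0 : ℝ),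
          ∃ f : M → ℝ, f p = 0 ∧ LittleLip f ∧ (∀ s t : M, |f s - f t| ≤ dist s t) ∧
            ∀ t : M, |f t - F t| ≤ ε) :=
  conditionB_iff_conditionB'_general p P hPd
end

section
/- Let (M,d) be a compact metric space with base point p and let 0 < α < 1. Then the snowflake M^α = (M, d^α) satisfies condition (B'): for every F : M → ℝ with F(p) = 0 and |F(s) − F(t)| ≤ d(s,t)^α for all s,t ∈ M, and for every ε > 0, there exists f : M → ℝ with f(p) = 0, |f(s) − f(t)| ≤ d(s,t)^α for all s,t, such that f is little Lipschitz with respect to d^α and sup_{t∈M} |f(t) − F(t)| ≤ ε. -/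
/-!
Regularise `F` by the inf-convolution `f₀ s = ⨅ t, F t + ω (d s t)` with the modulus
`ω r = min (r ^ α) (L * r)`, `L = ρ ^ (α - 1)`. Being concave, `ω` is subadditive, so `f₀` has
`ω` as a modulus of continuity: it is `α`-Hölder with constant `1` and `L`-Lipschitz, and since
`α < 1` an `L`-Lipschitz function is little Lipschitz for `d ^ α`. From `r ^ α ≤ ω r + ρ ^ α`
we get `F - ρ ^ α ≤ f₀ ≤ F`; normalising `f = f₀ - f₀ p` costs another `ρ ^ α`, and
`ρ ^ α = ε / 2` is chosen.
-/

open Set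

lemma ConcaveOn.map_add_le_add {f : ℝ → ℝ} (hf : ConcaveOn ℝ (Ici 0) f) (hf0 : 0 ≤ f 0)
    {x y : ℝ} (hx : 0 ≤ x) (hy : 0 ≤ y) : f (x + y) ≤ f x + f y := by
  rcases (add_nonneg hx hy).eq_or_lt with hxy | hxy
  · obtain ⟨rfl, rfl⟩ : x = 0 ∧ y = 0 := ⟨by linarith, by linarith⟩
    simpa using hf0
  -- `x` and `y` are convex combinations of `x + y` and `0`
  have key {a b : ℝ} (ha : 0 ≤ a) (hb : 0 ≤ b) (hab : a + b = x + y) :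
      a / (x + y) * f (x + y) ≤ f a := by
    have h := hf.2 (mem_Ici.2 hxy.le) (mem_Ici.2 le_rfl) (div_nonneg ha hxy.le)
      (div_nonneg hb hxy.le) (by field_simp; linarith)
    simp only [smul_eq_mul, mul_zero, add_zero] at h
    rw [div_mul_cancel₀ _ hxy.ne'] at h
    nlinarith [div_nonneg hb hxy.le]
  have hsum : x / (x + y) * f (x + y) + y / (x + y) * f (x + y) = f (x + y) := by
    field_simp
  linarith [key hx hy rfl, key hy hx (add_comm y x)]

section SnowflakeModulus

variable {α L : ℝ}

lemma monotoneOn_min_rpow_mul (hα : 0 ≤ α) (hL : 0 ≤ L) :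
    MonotoneOn (fun r : ℝ => min (r ^ α) (L * r)) (Ici 0) := fun _ hx _ _ hxy =>
  min_le_min (Real.rpow_le_rpow hx hxy hα) (mul_le_mul_of_nonneg_left hxy hL)

lemma concaveOn_min_rpow_mul (hα0 : 0 ≤ α) (hα1 : α ≤ 1) (hL : 0 ≤ L) :
    ConcaveOn ℝ (Ici 0) (fun r : ℝ => min (r ^ α) (L * r)) :=
  (Real.concaveOn_rpow hα0 hα1).inf ((concaveOn_id (convex_Ici 0)).smul hL)

lemma Real.rpow_le_min_rpow_mul_add {r ρ : ℝ} (hα0 : 0 ≤ α) (hα1 : α ≤ 1) (hr : 0 ≤ r)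
    (hρ : 0 < ρ) : r ^ α ≤ min (r ^ α) (ρ ^ (α - 1) * r) + ρ ^ α := by
  rw [← min_add_add_right]
  refine le_min (le_add_of_nonneg_right (Real.rpow_nonneg hρ.le α)) ?_
  rcases le_total r ρ with hrρ | hρr
  · exact (Real.rpow_le_rpow hr hrρ hα0).trans
      (le_add_of_nonneg_left (mul_nonneg (Real.rpow_nonneg hρ.le _) hr))
  · have hr0 : 0 < r := hρ.trans_le hρr
    calc r ^ α = r ^ (α - 1) * r := by rw [Real.rpow_sub_one hr0.ne', div_mul_cancel₀ _ hr0.ne']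
      _ ≤ ρ ^ (α - 1) * r :=
        mul_le_mul_of_nonneg_right (Real.rpow_le_rpow_of_nonpos hρ hρr (by linarith)) hr
      _ ≤ ρ ^ (α - 1) * r + ρ ^ α := le_add_of_nonneg_right (Real.rpow_nonneg hρ.le α)

lemma Real.exists_forall_rpow_lt_mul_le_mul_rpow {ε : ℝ} (hα0 : 0 < α) (hα1 : α < 1)
    (hL : 0 < L) (hε : 0 < ε) : ∃ δ > 0, ∀ r, 0 ≤ r → r ^ α < δ → L * r ≤ ε * r ^ α := by
  set c := (ε / L) ^ (1 - α)⁻¹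
  have hc : 0 < c := by positivity
  refine ⟨c ^ α, by positivity, fun r hr hrδ => ?_⟩
  have hrc : r ≤ c := ((Real.rpow_lt_rpow_iff hr hc.le hα0).1 hrδ).le
  have hr' : r ^ (1 - α) ≤ ε / L :=
    calc r ^ (1 - α) ≤ c ^ (1 - α) := Real.rpow_le_rpow hr hrc (by linarith)
      _ = ε / L := Real.rpow_inv_rpow (by positivity) (by linarith)
  calc L * r = L * r ^ (1 - α) * r ^ α := by
        rw [mul_assoc, ← Real.rpow_add' hr (by norm_num), sub_add_cancel, Real.rpow_one]
    _ ≤ L * (ε / L) * r ^ α := by gcongr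
    _ = ε * r ^ α := by field_simp

end SnowflakeModulus

section InfConvolution

variable {M : Type*} [PseudoMetricSpace M]

noncomputable def infConvolution (F : M → ℝ) (ω : ℝ → ℝ) (s : M) : ℝ :=
  ⨅ t, F t + ω (dist s t)

variable {F : M → ℝ} {ω : ℝ → ℝ} {c : ℝ}

lemma bddBelow_range_add_dist (hF : ∀ s t, F s ≤ F t + ω (dist s t) + c) (s : M) :
    BddBelow (range fun t => F t + ω (dist s t)) :=
  ⟨F s - c, by rintro _ ⟨t, rfl⟩; linarith [hF s t]⟩

lemma infConvolution_le (hF : ∀ s t, F s ≤ F t + ω (dist s t) + c) (hω0 : ω 0 = 0) (s : M) :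
    infConvolution F ω s ≤ F s :=
  (ciInf_le (bddBelow_range_add_dist hF s) s).trans_eq (by simp [hω0])

lemma sub_le_infConvolution [Nonempty M] (hF : ∀ s t, F s ≤ F t + ω (dist s t) + c) (s : M) :
    F s - c ≤ infConvolution F ω s :=
  le_ciInf fun t => by linarith [hF s t]

lemma infConvolution_le_add (hF : ∀ s t, F s ≤ F t + ω (dist s t) + c)
    (hω_mono : MonotoneOn ω (Ici 0))
    (hω_add : ∀ x y, 0 ≤ x → 0 ≤ y → ω (x + y) ≤ ω x + ω y) (s u : M) :
    infConvolution F ω s ≤ infConvolution F ω u + ω (dist s u) := by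
  have : Nonempty M := ⟨u⟩
  refine sub_le_iff_le_add.1 (le_ciInf fun t => ?_)
  have h_tri : ω (dist s t) ≤ ω (dist s u) + ω (dist u t) :=
    (hω_mono dist_nonneg (add_nonneg dist_nonneg dist_nonneg) (dist_triangle s u t)).trans
      (hω_add _ _ dist_nonneg dist_nonneg)
  have h_inf : infConvolution F ω s ≤ F t + ω (dist s t) :=
    ciInf_le (bddBelow_range_add_dist hF s) t
  linarith

lemma abs_infConvolution_sub_le (hF : ∀ s t, F s ≤ F t + ω (dist s t) + c)
    (hω_mono : MonotoneOn ω (Ici 0))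
    (hω_add : ∀ x y, 0 ≤ x → 0 ≤ y → ω (x + y) ≤ ω x + ω y) (s u : M) :
    |infConvolution F ω s - infConvolution F ω u| ≤ ω (dist s u) := by
  rw [abs_sub_le_iff]
  constructor
  · linarith [infConvolution_le_add hF hω_mono hω_add s u]
  · linarith [dist_comm u s ▸ infConvolution_le_add hF hω_mono hω_add u s]

end InfConvolution

lemma exists_forall_rpow_lt_abs_sub_le_mul_rpow {M : Type*} [PseudoMetricSpace M] {f : M → ℝ}
    {α L ε : ℝ} (hα0 : 0 < α) (hα1 : α < 1) (hL : 0 < L) (hε : 0 < ε)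
    (hf : ∀ s t, |f s - f t| ≤ L * dist s t) :
    ∃ δ > 0, ∀ s t, dist s t ^ α < δ → |f s - f t| ≤ ε * dist s t ^ α := by
  obtain ⟨δ, hδ, h⟩ := Real.exists_forall_rpow_lt_mul_le_mul_rpow hα0 hα1 hL hε
  exact ⟨δ, hδ, fun s t hst => (hf s t).trans (h _ dist_nonneg hst)⟩

theorem snowflake_conditionB'_general {M : Type*} [MetricSpace M] (p : M)
    (α : ℝ) (hα0 : 0 < α) (hα1 : α < 1)
    (F : M → ℝ) (hFp : F p = 0) (hF : ∀ s t : M, |F s - F t| ≤ dist s t ^ α)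
    (ε : ℝ) (hε : 0 < ε) :
    ∃ f : M → ℝ, f p = 0 ∧ (∀ s t : M, |f s - f t| ≤ dist s t ^ α) ∧
      (∀ ε' > (0 : ℝ), ∃ δ > (0 : ℝ), ∀ s t : M,
        dist s t ^ α < δ → |f s - f t| ≤ ε' * dist s t ^ α) ∧
      ∀ t : M, |f t - F t| ≤ ε := by
  have : Nonempty M := ⟨p⟩
  set ρ := (ε / 2) ^ α⁻¹
  have hρ : 0 < ρ := by positivity
  have hρα : ρ ^ α = ε / 2 := Real.rpow_inv_rpow (by positivity) hα0.ne'
  set L := ρ ^ (α - 1)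
  have hL : 0 < L := by positivity
  set ω := fun r : ℝ => min (r ^ α) (L * r)
  have hω0 : ω 0 = 0 := by simp [ω, Real.zero_rpow hα0.ne']
  have hω_mono : MonotoneOn ω (Ici 0) := monotoneOn_min_rpow_mul hα0.le hL.le
  have hω_add x y (hx : 0 ≤ x) (hy : 0 ≤ y) : ω (x + y) ≤ ω x + ω y :=
    (concaveOn_min_rpow_mul hα0.le hα1.le hL.le).map_add_le_add hω0.ge hx hy
  have hFω s t : F s ≤ F t + ω (dist s t) + ε / 2 := by
    have := Real.rpow_le_min_rpow_mul_add hα0.le hα1.le (dist_nonneg (x := s) (y := t)) hρ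
    linarith [le_abs_self (F s - F t), hF s t]
  set f₀ := infConvolution F ω
  have hf₀ := abs_infConvolution_sub_le hFω hω_mono hω_add
  have hf₀F t : |f₀ t - F t| ≤ ε / 2 := abs_le.2
    ⟨by linarith [sub_le_infConvolution hFω t], by linarith [infConvolution_le hFω hω0 t]⟩
  refine ⟨fun s => f₀ s - f₀ p, sub_self _, fun s t => ?_, fun ε' hε' => ?_, fun t => ?_⟩
  · simpa using (hf₀ s t).trans (min_le_left _ _)
  · exact exists_forall_rpow_lt_abs_sub_le_mul_rpow hα0 hα1 hL hε'
      fun s t => by simpa using (hf₀ s t).trans (min_le_right _ _)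
  · have hp := hf₀F p
    rw [hFp, sub_zero] at hp
    calc |f₀ t - f₀ p - F t| ≤ |f₀ t - F t| + |f₀ p| := by
          simpa [sub_right_comm] using abs_sub (f₀ t - F t) (f₀ p)
      _ ≤ ε := by linarith [hf₀F t]

/-- Every compact pointed metric space satisfies condition (B') for the snowflake metric
`d^α`, `0 < α < 1`: every `1`-Hölder function vanishing at the base point can be uniformly
approximated by little Lipschitz (w.r.t. `d^α`) functions of Hölder constant at most `1`
vanishing at the base point. -/
theorem snowflake_conditionB' {M : Type*} [MetricSpace M] [CompactSpace M] (p : M)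
    (α : ℝ) (hα0 : 0 < α) (hα1 : α < 1)
    (F : M → ℝ) (hFp : F p = 0) (hF : ∀ s t : M, |F s - F t| ≤ dist s t ^ α)
    (ε : ℝ) (hε : 0 < ε) :
    ∃ f : M → ℝ, f p = 0 ∧ (∀ s t : M, |f s - f t| ≤ dist s t ^ α) ∧
      (∀ ε' > (0 : ℝ), ∃ δ > (0 : ℝ), ∀ s t : M,
        dist s t ^ α < δ → |f s - f t| ≤ ε' * dist s t ^ α) ∧
      ∀ t : M, |f t - F t| ≤ ε :=
  snowflake_conditionB'_general p α hα0 hα1 F hFp hF ε hε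
end
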